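/- For all invertible 2×2 real matrices g, g′ and every nonzero vector v ∈ ℝ²: d(gv, g′v) ≤ max(‖g⁻¹‖, ‖g′⁻¹‖)·‖g − g′‖. -/
import Mathlib


noncomputable section

/-- The Euclidean plane `ℝ²`. -/
abbrev E2 : Type := EuclideanSpace ℝ (Fin 2)

/-- The group of invertible continuous linear maps of `ℝ²` (invertible 2×2 real matrices,
with the operator norm induced by the Euclidean norm). -/
abbrev GL2 : Type := (E2 →L[ℝ] E2)ˣ

/-- The projective (sine-of-angle) distance
`d(u, v) = |u₁v₂ − u₂v₁| / (‖u‖·‖v‖)` between the lines spanned by nonzero `u, v ∈ ℝ²`. -/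
def projDist (u v : E2) : ℝ :=
  |u 0 * v 1 - u 1 * v 0| / (‖u‖ * ‖v‖)

lemma cross_le (u z : E2) : |u 0 * z 1 - u 1 * z 0| ≤ ‖u‖ * ‖z‖ := by
  have hu : ‖u‖ ^ 2 = (u 0) ^ 2 + (u 1) ^ 2 := by
    rw [EuclideanSpace.norm_eq, Real.sq_sqrt (by positivity)]
    simp [Fin.sum_univ_two, sq_abs]
  have hz : ‖z‖ ^ 2 = (z 0) ^ 2 + (z 1) ^ 2 := by
    rw [EuclideanSpace.norm_eq, Real.sq_sqrt (by positivity)]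
    simp [Fin.sum_univ_two, sq_abs]
  have h1 : (0:ℝ) ≤ ‖u‖ := norm_nonneg u
  have h2 : (0:ℝ) ≤ ‖z‖ := norm_nonneg z
  rw [abs_le]
  constructor <;> nlinarith [sq_nonneg (u 0 * z 0 + u 1 * z 1), sq_nonneg (‖u‖ - ‖z‖),
    sq_nonneg (u 0 * z 1 - u 1 * z 0), mul_nonneg h1 h2]

/-- for all invertible `g, g'` and every nonzero `v ∈ ℝ²`:
`d(gv, g'v) ≤ max(‖g⁻¹‖, ‖g'⁻¹‖)·‖g − g'‖`. -/
theorem stmt3 (g g' : GL2) (v : E2) (hv : v ≠ 0) :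
    projDist ((g : E2 →L[ℝ] E2) v) ((g' : E2 →L[ℝ] E2) v) ≤
      max ‖((g⁻¹ : GL2) : E2 →L[ℝ] E2)‖ ‖((g'⁻¹ : GL2) : E2 →L[ℝ] E2)‖ *
        ‖(g : E2 →L[ℝ] E2) - (g' : E2 →L[ℝ] E2)‖ := by
  set u : E2 := (g : E2 →L[ℝ] E2) v with hu
  set w : E2 := (g' : E2 →L[ℝ] E2) v with hw
  have hvu : ((g⁻¹ : GL2) : E2 →L[ℝ] E2) u = v := by
    rw [hu, ← ContinuousLinearMap.comp_apply, ← ContinuousLinearMap.mul_def, g.inv_mul]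
    rfl
  have hvw : ((g'⁻¹ : GL2) : E2 →L[ℝ] E2) w = v := by
    rw [hw, ← ContinuousLinearMap.comp_apply, ← ContinuousLinearMap.mul_def, g'.inv_mul]
    rfl
  have hu0 : u ≠ 0 := fun h => hv (by rw [← hvu, h, map_zero])
  have hw0 : w ≠ 0 := fun h => hv (by rw [← hvw, h, map_zero])
  have hun : (0:ℝ) < ‖u‖ := norm_pos_iff.mpr hu0
  have hwn : (0:ℝ) < ‖w‖ := norm_pos_iff.mpr hw0
  -- cross product identity
  have key : |u 0 * w 1 - u 1 * w 0| ≤ ‖u‖ * ‖w - u‖ := by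
    have : u 0 * w 1 - u 1 * w 0 = u 0 * (w - u) 1 - u 1 * (w - u) 0 := by
      simp [PiLp.sub_apply]; ring
    rw [this]
    exact cross_le u (w - u)
  have hwu : ‖w - u‖ ≤ ‖(g : E2 →L[ℝ] E2) - (g' : E2 →L[ℝ] E2)‖ * ‖v‖ := by
    have : w - u = ((g' : E2 →L[ℝ] E2) - (g : E2 →L[ℝ] E2)) v := by
      simp [hu, hw]
    rw [this, norm_sub_rev ((g : E2 →L[ℝ] E2))]
    exact ContinuousLinearMap.le_opNorm _ v
  have hvle : ‖v‖ ≤ ‖((g'⁻¹ : GL2) : E2 →L[ℝ] E2)‖ * ‖w‖ := by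
    conv_lhs => rw [← hvw]
    exact ContinuousLinearMap.le_opNorm _ w
  have hmax : ‖((g'⁻¹ : GL2) : E2 →L[ℝ] E2)‖ ≤
      max ‖((g⁻¹ : GL2) : E2 →L[ℝ] E2)‖ ‖((g'⁻¹ : GL2) : E2 →L[ℝ] E2)‖ := le_max_right _ _
  have hgn : (0:ℝ) ≤ ‖(g : E2 →L[ℝ] E2) - (g' : E2 →L[ℝ] E2)‖ := norm_nonneg _
  rw [projDist, div_le_iff₀ (by positivity)]
  calc |u 0 * w 1 - u 1 * w 0| ≤ ‖u‖ * ‖w - u‖ := key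
    _ ≤ ‖u‖ * (‖(g : E2 →L[ℝ] E2) - (g' : E2 →L[ℝ] E2)‖ * ‖v‖) := by
        exact mul_le_mul_of_nonneg_left hwu hun.le
    _ ≤ ‖u‖ * (‖(g : E2 →L[ℝ] E2) - (g' : E2 →L[ℝ] E2)‖ *
          (‖((g'⁻¹ : GL2) : E2 →L[ℝ] E2)‖ * ‖w‖)) := by
        gcongr
    _ ≤ ‖u‖ * (‖(g : E2 →L[ℝ] E2) - (g' : E2 →L[ℝ] E2)‖ *
          (max ‖((g⁻¹ : GL2) : E2 →L[ℝ] E2)‖ ‖((g'⁻¹ : GL2) : E2 →L[ℝ] E2)‖ * ‖w‖)) := by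
        gcongr
    _ = max ‖((g⁻¹ : GL2) : E2 →L[ℝ] E2)‖ ‖((g'⁻¹ : GL2) : E2 →L[ℝ] E2)‖ *
          ‖(g : E2 →L[ℝ] E2) - (g' : E2 →L[ℝ] E2)‖ * (‖u‖ * ‖w‖) := by ring
end
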